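/- Let Ω̂ be an (N+1)×(N+1) entrywise-nonnegative positive definite matrix, V an (N+1)×(N+1) entrywise-nonnegative symmetric matrix, and γ > 0 such that γI ≻ Ω̂^{1/2} V Ω̂^{1/2}. Then the matrix Ω* = Ω̂^{1/2}[I − γ^{-1}Ω̂^{1/2} V Ω̂^{1/2}]^{-1}Ω̂^{1/2} is symmetric positive definite and entrywise nonnegative (doubly nonnegative). -/

import Mathlib

open Matrix Finset

section

open scoped ComplexOrder

/-- The square root of a positive semidefinite matrix, as defined in the older Mathlib
(removed since). -/
noncomputable def Matrix.PosSemidef.sqrt {n 𝕜 : Type*} [Fintype n] [DecidableEq n] [RCLike 𝕜]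
    {A : Matrix n n 𝕜} (hA : A.PosSemidef) : Matrix n n 𝕜 :=
  hA.1.eigenvectorUnitary.1 * diagonal ((↑) ∘ (√·) ∘ hA.1.eigenvalues) *
    (star hA.1.eigenvectorUnitary : Matrix n n 𝕜)

end

section Aux

variable {n : Type*} [Fintype n] [DecidableEq n]

private lemma posDef_smul_aux {M : Matrix n n ℝ} (hM : M.PosDef) {c : ℝ} (hc : 0 < c) :
    (c • M).PosDef := by
  refine PosDef.of_dotProduct_mulVec_pos ?_ fun x hx => ?_
  · show (c • M)ᴴ = c • M
    rw [conjTranspose_smul, hM.1.eq, star_trivial]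
  · rw [smul_mulVec, dotProduct_smul, smul_eq_mul]
    exact mul_pos hc (hM.dotProduct_mulVec_pos hx)

/-- If `C` is a real symmetric entrywise-nonnegative matrix with `1 - C` positive
definite, then `(1 - C)⁻¹` is entrywise nonnegative. -/
private lemma inv_one_sub_nonneg {C : Matrix n n ℝ} (hCh : C.IsHermitian)
    (hCnn : ∀ i j, 0 ≤ C i j) (h1 : (1 - C).PosDef) :
    ∀ i j, 0 ≤ (1 - C)⁻¹ i j := by
  -- eigenvalue bounds
  have hev : ∀ μ, |hCh.eigenvalues μ| < 1 := by
    intro μ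
    set v : n → ℝ := ⇑(hCh.eigenvectorBasis μ) with hvdef
    have hvne : v ≠ 0 := by
      have hne := hCh.eigenvectorBasis.orthonormal.ne_zero μ
      intro h
      exact hne (by ext i; exact congrFun h i)
    have hvv : 0 < v ⬝ᵥ v := by
      have := dotProduct_star_self_pos_iff (v := v) |>.mpr hvne
      rwa [star_trivial] at this
    have hCv : C *ᵥ v = hCh.eigenvalues μ • v := hCh.mulVec_eigenvectorBasis μ
    have hq := h1.dotProduct_mulVec_pos hvne
    rw [star_trivial, sub_mulVec, one_mulVec, dotProduct_sub, hCv, dotProduct_smul,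
      smul_eq_mul] at hq
    set w : n → ℝ := fun i => |v i| with hwdef
    have hwne : w ≠ 0 := by
      intro h
      apply hvne
      ext i
      have := congrFun h i
      simpa [hwdef, abs_eq_zero] using this
    have hww : w ⬝ᵥ w = v ⬝ᵥ v := by
      simp only [dotProduct, hwdef]
      exact Finset.sum_congr rfl fun i _ => abs_mul_abs_self _
    have habs : |v ⬝ᵥ C *ᵥ v| ≤ w ⬝ᵥ C *ᵥ w := by
      simp only [dotProduct, mulVec, hwdef]
      refine (Finset.abs_sum_le_sum_abs _ _).trans (Finset.sum_le_sum fun i _ => ?_)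
      rw [abs_mul]
      refine mul_le_mul_of_nonneg_left ?_ (abs_nonneg _)
      refine (Finset.abs_sum_le_sum_abs _ _).trans (Finset.sum_le_sum fun j _ => ?_)
      rw [abs_mul, abs_of_nonneg (hCnn i j)]
    have hq2 := h1.dotProduct_mulVec_pos hwne
    rw [star_trivial, sub_mulVec, one_mulVec, dotProduct_sub, hww] at hq2
    have hlow := neg_abs_le (v ⬝ᵥ C *ᵥ v)
    rw [hCv, dotProduct_smul, smul_eq_mul] at hlow habs
    rw [abs_lt]
    constructor
    · nlinarith
    · nlinarith
  -- spectral decomposition and powers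
  set U : Matrix n n ℝ := (hCh.eigenvectorUnitary : Matrix n n ℝ) with hUdef
  have hUU : star U * U = 1 := mem_unitaryGroup_iff'.mp hCh.eigenvectorUnitary.2
  have hUU' : U * star U = 1 := mem_unitaryGroup_iff.mp hCh.eigenvectorUnitary.2
  have hspec : C = U * diagonal hCh.eigenvalues * star U := by
    have h := hCh.spectral_theorem
    have : (RCLike.ofReal ∘ hCh.eigenvalues : n → ℝ) = hCh.eigenvalues := by
      ext i; simp
    rwa [this, Unitary.conjStarAlgAut_apply] at h
  have hpow : ∀ k : ℕ, C ^ k = U * diagonal (fun μ => hCh.eigenvalues μ ^ k) * star U := by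
    intro k
    induction k with
    | zero =>
      simp only [pow_zero]
      have : (diagonal (fun μ => (1 : ℝ)) : Matrix n n ℝ) = 1 := diagonal_one
      rw [this, Matrix.mul_one, hUU']
    | succ k ih =>
      rw [pow_succ, ih]
      calc U * diagonal (fun μ => hCh.eigenvalues μ ^ k) * star U * C
          = U * diagonal (fun μ => hCh.eigenvalues μ ^ k) * star U *
            (U * diagonal hCh.eigenvalues * star U) := by rw [← hspec]
        _ = U * diagonal (fun μ => hCh.eigenvalues μ ^ k) * (star U * U) *
            diagonal hCh.eigenvalues * star U := by simp only [Matrix.mul_assoc]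
        _ = U * (diagonal (fun μ => hCh.eigenvalues μ ^ k) *
            diagonal hCh.eigenvalues) * star U := by
            rw [hUU, Matrix.mul_one, Matrix.mul_assoc U]
        _ = U * diagonal (fun μ => hCh.eigenvalues μ ^ (k + 1)) * star U := by
            rw [diagonal_mul_diagonal]
            simp only [← pow_succ]
  -- entries of powers
  have hentry : ∀ (m : ℕ) (a b : n),
      (C ^ m) a b = ∑ μ, U a μ * hCh.eigenvalues μ ^ m * U b μ := by
    intro m a b
    rw [hpow m, mul_apply]
    refine Finset.sum_congr rfl fun c _ => ?_
    rw [Matrix.mul_diagonal, Matrix.star_apply, star_trivial]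
  -- nonnegativity of powers
  have hpownn : ∀ (m : ℕ) (i j : n), 0 ≤ (C ^ m) i j := by
    intro m
    induction m with
    | zero =>
      intro i j
      rw [pow_zero, Matrix.one_apply]
      split <;> norm_num
    | succ m ih =>
      intro i j
      rw [pow_succ, mul_apply]
      exact Finset.sum_nonneg fun a _ => mul_nonneg (ih i a) (hCnn a j)
  -- invertibility of 1 - C
  have hmul : (1 - C) * (1 - C)⁻¹ = 1 :=
    Matrix.mul_nonsing_inv _ h1.det_pos.ne'.isUnit
  -- geometric partial sums
  have hPS : ∀ m : ℕ, (∑ k ∈ Finset.range m, C ^ k)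
      = (1 - C)⁻¹ - C ^ m * (1 - C)⁻¹ := by
    intro m
    have h := geom_sum_mul C m
    have h2 : (∑ k ∈ Finset.range m, C ^ k) * (1 - C) = 1 - C ^ m := by
      calc (∑ k ∈ Finset.range m, C ^ k) * (1 - C)
          = -((∑ k ∈ Finset.range m, C ^ k) * (C - 1)) := by rw [← mul_neg, neg_sub]
        _ = -(C ^ m - 1) := by rw [h]
        _ = 1 - C ^ m := by rw [neg_sub]
    calc (∑ k ∈ Finset.range m, C ^ k)
        = (∑ k ∈ Finset.range m, C ^ k) * ((1 - C) * (1 - C)⁻¹) := by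
          rw [hmul, Matrix.mul_one]
      _ = ((∑ k ∈ Finset.range m, C ^ k) * (1 - C)) * (1 - C)⁻¹ := by
          rw [Matrix.mul_assoc]
      _ = (1 - C ^ m) * (1 - C)⁻¹ := by rw [h2]
      _ = (1 - C)⁻¹ - C ^ m * (1 - C)⁻¹ := by rw [Matrix.sub_mul, Matrix.one_mul]
  intro i j
  -- the correction term tends to zero
  have hC0 : ∀ a b : n, Filter.Tendsto (fun m => (C ^ m) a b)
      Filter.atTop (nhds 0) := by
    intro a b
    simp only [hentry]
    have h0 : (0 : ℝ) = ∑ μ : n, U a μ * 0 * U b μ := by simp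
    rw [h0]
    refine tendsto_finset_sum _ fun μ _ => ?_
    have := tendsto_pow_atTop_nhds_zero_of_abs_lt_one (hev μ)
    simpa using (this.const_mul (U a μ)).mul_const (U b μ)
  have hterm : Filter.Tendsto (fun m => (C ^ m * (1 - C)⁻¹) i j)
      Filter.atTop (nhds 0) := by
    simp only [mul_apply]
    have h0 : (0 : ℝ) = ∑ a : n, 0 * (1 - C)⁻¹ a j := by simp
    rw [h0]
    exact tendsto_finset_sum _ fun a _ => (hC0 i a).mul_const _
  have hfin : Filter.Tendsto (fun m => (∑ k ∈ Finset.range m, C ^ k) i j)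
      Filter.atTop (nhds ((1 - C)⁻¹ i j)) := by
    simp only [hPS, Matrix.sub_apply]
    simpa using tendsto_const_nhds.sub hterm
  refine ge_of_tendsto' hfin fun m => ?_
  rw [Matrix.sum_apply]
  exact Finset.sum_nonneg fun k _ => hpownn k i j

end Aux

theorem logdet_optimizer_doubly_nonneg {N : ℕ}
    (Ωhat V : Matrix (Fin (N + 1)) (Fin (N + 1)) ℝ)
    (hΩhat : Ωhat.PosDef) (hΩhatnn : ∀ i j, 0 ≤ Ωhat i j)
    (hsqrtnn : ∀ i j, 0 ≤ hΩhat.posSemidef.sqrt i j)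
    (hV : V.IsHermitian) (hVnn : ∀ i j, 0 ≤ V i j)
    (γ : ℝ) (hγ : 0 < γ)
    (hPD : (γ • (1 : Matrix (Fin (N + 1)) (Fin (N + 1)) ℝ)
        - hΩhat.posSemidef.sqrt * V * hΩhat.posSemidef.sqrt).PosDef) :
    (hΩhat.posSemidef.sqrt
        * (1 - γ⁻¹ • (hΩhat.posSemidef.sqrt * V * hΩhat.posSemidef.sqrt))⁻¹
        * hΩhat.posSemidef.sqrt).PosDef ∧
      ∀ i j, 0 ≤ (hΩhat.posSemidef.sqrt
        * (1 - γ⁻¹ • (hΩhat.posSemidef.sqrt * V * hΩhat.posSemidef.sqrt))⁻¹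
        * hΩhat.posSemidef.sqrt) i j := by
  set S := hΩhat.posSemidef.sqrt with hSdef
  have hSh : S.IsHermitian := by
    show Sᴴ = S
    rw [hSdef, Matrix.PosSemidef.sqrt, conjTranspose_mul, conjTranspose_mul, diagonal_conjTranspose]
    simp only [Matrix.star_eq_conjTranspose, conjTranspose_conjTranspose, Matrix.mul_assoc]
    congr 2
  have hSS : S * S = Ωhat := by
    set U : Matrix (Fin (N + 1)) (Fin (N + 1)) ℝ :=
      (hΩhat.posSemidef.1.eigenvectorUnitary : Matrix (Fin (N + 1)) (Fin (N + 1)) ℝ) with hUdef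
    have hUU : star U * U = 1 := mem_unitaryGroup_iff'.mp hΩhat.posSemidef.1.eigenvectorUnitary.2
    have h := hΩhat.posSemidef.1.spectral_theorem
    rw [Unitary.conjStarAlgAut_apply] at h
    conv_rhs => rw [h]
    rw [hSdef, Matrix.PosSemidef.sqrt]
    calc _ = U * (diagonal ((RCLike.ofReal : ℝ → ℝ) ∘ (√·) ∘ hΩhat.posSemidef.1.eigenvalues) *
          (star U * U) *
          diagonal ((RCLike.ofReal : ℝ → ℝ) ∘ (√·) ∘ hΩhat.posSemidef.1.eigenvalues)) * star U := by
            simp only [hUdef, Matrix.mul_assoc]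
      _ = _ := by
        rw [hUU, Matrix.mul_one, diagonal_mul_diagonal]
        congr 2
        congr 1
        ext i
        simp only [Function.comp_apply, RCLike.ofReal_real_eq_id, id]
        exact Real.mul_self_sqrt (hΩhat.posSemidef.eigenvalues_nonneg i)
  have hSdet : S.det ≠ 0 := by
    intro h
    have : Ωhat.det = 0 := by rw [← hSS, det_mul, h, zero_mul]
    exact hΩhat.det_pos.ne' this
  set A := S * V * S with hAdef
  have hAh : A.IsHermitian := by
    show Aᴴ = A
    rw [hAdef, conjTranspose_mul, conjTranspose_mul, hSh.eq, hV.eq, Matrix.mul_assoc]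
  set C := γ⁻¹ • A with hCdef
  have hCh : C.IsHermitian := by
    show Cᴴ = C
    rw [hCdef, conjTranspose_smul, hAh.eq, star_trivial]
  have hCnn : ∀ i j, 0 ≤ C i j := by
    intro i j
    have hA : 0 ≤ A i j := by
      rw [hAdef, mul_apply]
      refine Finset.sum_nonneg fun b _ => mul_nonneg ?_ (hsqrtnn b j)
      rw [mul_apply]
      exact Finset.sum_nonneg fun a _ => mul_nonneg (hsqrtnn i a) (hVnn a b)
    simpa [hCdef] using mul_nonneg (inv_nonneg.mpr hγ.le) hA
  have h1C : (1 - C).PosDef := by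
    have heq : (1 : Matrix (Fin (N + 1)) (Fin (N + 1)) ℝ) - C
        = γ⁻¹ • (γ • (1 : Matrix (Fin (N + 1)) (Fin (N + 1)) ℝ) - A) := by
      rw [smul_sub, smul_smul, inv_mul_cancel₀ hγ.ne', one_smul, hCdef]
    rw [heq]
    exact posDef_smul_aux hPD (inv_pos.mpr hγ)
  have hB : (1 - C)⁻¹.PosDef := h1C.inv
  have hBnn : ∀ i j, 0 ≤ (1 - C)⁻¹ i j := inv_one_sub_nonneg hCh hCnn h1C
  have hSinj : Function.Injective S.mulVec :=
    mulVec_injective_iff_isUnit.mpr ((isUnit_iff_isUnit_det S).mpr hSdet.isUnit)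
  constructor
  · refine PosDef.of_dotProduct_mulVec_pos ?_ fun x hx => ?_
    · show (S * (1 - C)⁻¹ * S)ᴴ = S * (1 - C)⁻¹ * S
      rw [conjTranspose_mul, conjTranspose_mul, hSh.eq, hB.1.eq, Matrix.mul_assoc]
    · have hy : S *ᵥ x ≠ 0 := fun h => hx (hSinj (by rw [h, mulVec_zero]))
      have key : star x ⬝ᵥ (S * (1 - C)⁻¹ * S) *ᵥ x
          = star (S *ᵥ x) ⬝ᵥ (1 - C)⁻¹ *ᵥ (S *ᵥ x) := by
        rw [star_trivial, star_trivial, ← mulVec_mulVec, ← mulVec_mulVec,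
          dotProduct_mulVec x S]
        congr 1
        have hSt : Sᵀ = S := by
          ext a b
          conv_rhs => rw [← hSh.eq]
          simp [conjTranspose_apply]
        rw [← vecMul_transpose, hSt]
      rw [key]
      exact hB.dotProduct_mulVec_pos hy
  · intro i j
    rw [mul_apply]
    refine Finset.sum_nonneg fun b _ => mul_nonneg ?_ (hsqrtnn b j)
    rw [mul_apply]
    exact Finset.sum_nonneg fun a _ => mul_nonneg (hsqrtnn i a) (hBnn a b)
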